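/- There is no finite simple nonabelian group G with U(G) = {1, rq, 4rq, 8rq, 8r²} for distinct odd primes r, q. -/
import Mathlib

open scoped MatrixGroups

/-- The size of the conjugacy class of `x`. -/
noncomputable def classSize {G : Type*} [Group G] (x : G) : ℕ :=
  Nat.card {y : G // IsConj x y}

/-- `u_G(n)`: the number of elements of `G` whose conjugacy class has size `n`. -/
noncomputable def sameSizeCount (G : Type*) [Group G] (n : ℕ) : ℕ :=
  Nat.card {x : G // classSize x = n}

/-- `U(G)`: the same-size conjugacy class set of `G`. -/
def sameSizeSet (G : Type*) [Group G] : Set ℕ :=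
  {m | ∃ x : G, m = sameSizeCount G (classSize x)}

section Aux

variable {G : Type*} [Group G] [Finite G]

lemma aux_classSize_pos (x : G) : 0 < classSize x := by
  haveI : Nonempty {y : G // IsConj x y} := ⟨⟨x, IsConj.refl x⟩⟩
  exact Nat.card_pos

lemma aux_classSize_eq_of_isConj {x y : G} (h : IsConj x y) :
    classSize x = classSize y :=
  Nat.card_congr (Equiv.subtypeEquivRight fun z => ⟨fun hz => h.symm.trans hz,
    fun hz => h.trans hz⟩)

lemma aux_classSize_eq_index (x : G) :
    classSize x = (MulAction.stabilizer (ConjAct G) x).index := by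
  rw [Subgroup.index_eq_card]
  refine Nat.card_congr ?_
  refine (Equiv.subtypeEquivRight fun y => ?_).trans
    (MulAction.orbitEquivQuotientStabilizer (ConjAct G) x)
  rw [ConjAct.mem_orbit_conjAct]
  exact isConj_comm

lemma aux_classSize_dvd_card (x : G) : classSize x ∣ Nat.card G := by
  rw [aux_classSize_eq_index]
  have h := Subgroup.index_dvd_card (MulAction.stabilizer (ConjAct G) x)
  rwa [Nat.card_congr (ConjAct.toConjAct (G := G)).toEquiv.symm] at h

lemma aux_classSize_dvd_sameSizeCount (x : G) :
    classSize x ∣ sameSizeCount G (classSize x) := by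
  classical
  haveI : Fintype G := Fintype.ofFinite G
  set n := classSize x with hn
  have hfib : sameSizeCount G n
      = (Finset.univ.filter fun y : G => classSize y = n).card := by
    rw [sameSizeCount, Nat.card_eq_fintype_card]
    exact Fintype.card_of_subtype _ (by simp)
  rw [hfib, Finset.card_eq_sum_card_image (fun y : G => ConjClasses.mk y)]
  refine Finset.dvd_sum ?_
  intro c hc
  obtain ⟨x₀, hx₀mem, hx₀⟩ := Finset.mem_image.mp hc
  have hx₀n : classSize x₀ = n := (Finset.mem_filter.mp hx₀mem).2
  have hset : ((Finset.univ.filter fun y : G => classSize y = n).filter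
      fun y => ConjClasses.mk y = c) = Finset.univ.filter fun y : G => IsConj x₀ y := by
    ext y
    simp only [Finset.mem_filter, Finset.mem_univ, true_and]
    constructor
    · rintro ⟨-, hc'⟩
      rw [← hx₀, ConjClasses.mk_eq_mk_iff_isConj] at hc'
      exact hc'.symm
    · intro hconj
      refine ⟨by rw [← (aux_classSize_eq_of_isConj hconj)]; exact hx₀n, ?_⟩
      rw [← hx₀, ConjClasses.mk_eq_mk_iff_isConj]
      exact hconj.symm
  have hcard : ((Finset.univ.filter fun y : G => classSize y = n).filter
      fun y => ConjClasses.mk y = c).card = n := by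
    rw [hset]
    have h' : (Finset.univ.filter fun y : G => IsConj x₀ y).card = classSize x₀ := by
      rw [classSize, Nat.card_eq_fintype_card]
      exact (Fintype.card_of_subtype _ (by simp)).symm
    rw [h', hx₀n]
  rw [hcard]

lemma aux_class_equation {G' : Type*} [Group G'] [Fintype G'] :
    Fintype.card G' = ∑ n ∈ Finset.univ.image (classSize (G := G')), sameSizeCount G' n := by
  classical
  rw [← Finset.card_univ, Finset.card_eq_sum_card_image (classSize (G := G')) Finset.univ]
  refine Finset.sum_congr rfl fun n _ => ?_
  rw [sameSizeCount, Nat.card_eq_fintype_card]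
  exact (Fintype.card_of_subtype (Finset.univ.filter fun x : G' => classSize x = n)
    (fun y => ⟨fun hy => (Finset.mem_filter.mp hy).2,
      fun hy => Finset.mem_filter.mpr ⟨Finset.mem_univ y, hy⟩⟩)).symm

lemma aux_card_dvd_factorial [IsSimpleGroup G] (x : G) (hx : 1 < classSize x) :
    Nat.card G ∣ (classSize x).factorial := by
  classical
  haveI : Fintype G := Fintype.ofFinite G
  haveI : Nontrivial (ConjAct G) :=
    (ConjAct.toConjAct (G := G)).toEquiv.symm.nontrivial
  haveI : IsSimpleGroup (ConjAct G) :=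
    IsSimpleGroup.isSimpleGroup_of_surjective (ConjAct.toConjAct (G := G)).toMonoidHom
      (ConjAct.toConjAct (G := G)).surjective
  set H := MulAction.stabilizer (ConjAct G) x with hH
  have hidx : H.index = classSize x := (aux_classSize_eq_index x).symm
  have hcore : H.normalCore = ⊥ := by
    rcases (Subgroup.normalCore_normal H).eq_bot_or_eq_top with h | h
    · exact h
    · exfalso
      have hHtop : H = ⊤ := top_le_iff.mp (h ▸ H.normalCore_le)
      rw [hHtop, Subgroup.index_top] at hidx
      omega
  have hker : (MulAction.toPermHom (ConjAct G) (ConjAct G ⧸ H)).ker = ⊥ := by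
    rw [← Subgroup.normalCore_eq_ker, hcore]
  have hinj := (MonoidHom.ker_eq_bot_iff _).mp hker
  have h1 : Nat.card (ConjAct G) ∣ Nat.card (Equiv.Perm (ConjAct G ⧸ H)) :=
    Subgroup.card_dvd_of_injective _ hinj
  have h2 : Nat.card G = Nat.card (ConjAct G) :=
    Nat.card_congr (ConjAct.toConjAct (G := G)).toEquiv
  have h3 : Nat.card (Equiv.Perm (ConjAct G ⧸ H)) = (classSize x).factorial := by
    rw [Nat.card_eq_fintype_card, Fintype.card_perm, ← hidx, Subgroup.index_eq_card,
      Nat.card_eq_fintype_card]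
  rw [h2, ← h3]
  exact h1

lemma aux_center_bot [IsSimpleGroup G] (hna : ¬ ∀ a b : G, a * b = b * a) :
    Subgroup.center G = ⊥ := by
  rcases (inferInstance : (Subgroup.center G).Normal).eq_bot_or_eq_top with h | h
  · exact h
  · exfalso
    apply hna
    intro a b
    have hb : b ∈ Subgroup.center G := h.symm ▸ Subgroup.mem_top b
    exact Subgroup.mem_center_iff.mp hb a

lemma aux_classSize_eq_one_iff (hZ : Subgroup.center G = ⊥) (x : G) :
    classSize x = 1 ↔ x = 1 := by
  constructor
  · intro h1
    have hsub : Subsingleton {y : G // IsConj x y} :=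
      (Nat.card_eq_one_iff_unique.mp h1).1
    have hx : x ∈ Subgroup.center G := by
      rw [Subgroup.mem_center_iff]
      intro g
      have hconj : IsConj x (g * x * g⁻¹) := isConj_iff.mpr ⟨g, rfl⟩
      have h2 : (⟨x, IsConj.refl x⟩ : {y : G // IsConj x y}) = ⟨g * x * g⁻¹, hconj⟩ :=
        Subsingleton.elim _ _
      have heq : g * x * g⁻¹ = x := (congrArg Subtype.val h2).symm
      exact mul_inv_eq_iff_eq_mul.mp heq
    rwa [hZ, Subgroup.mem_bot] at hx
  · rintro rfl
    rw [classSize, Nat.card_eq_one_iff_unique]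
    refine ⟨⟨fun a b => Subtype.ext ?_⟩, ⟨⟨1, IsConj.refl 1⟩⟩⟩
    have ha := a.2; have hb := b.2
    rw [isConj_one_right] at ha hb
    rw [ha, hb]

lemma aux_sameSizeCount_one (hZ : Subgroup.center G = ⊥) :
    sameSizeCount G 1 = 1 := by
  rw [sameSizeCount, Nat.card_eq_one_iff_unique]
  constructor
  · refine ⟨fun a b => Subtype.ext ?_⟩
    have ha := (aux_classSize_eq_one_iff hZ a.1).mp a.2
    have hb := (aux_classSize_eq_one_iff hZ b.1).mp b.2
    rw [ha, hb]
  · exact ⟨⟨1, (aux_classSize_eq_one_iff hZ 1).mpr rfl⟩⟩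

end Aux

lemma aux_arith (r q N : ℕ) (hr : r.Prime) (hq : q.Prime) (hor : Odd r)
    (hoq : Odd q) (hrq : r ≠ q)
    (hfac : N ∣ q.factorial) (h40320 : N ∣ 40320) (hqN : q ∣ N)
    (hlb : 1 + 5 * (r * q) + 8 * (r * r) ≤ N)
    (hmod : N % (4 * r) = (1 + r * q) % (4 * r)) : False := by
  have hr2 : r % 2 = 1 := Nat.odd_iff.mp hor
  have hq2 : q % 2 = 1 := Nat.odd_iff.mp hoq
  have hr3 : 3 ≤ r := by have := hr.two_le; omega
  have hq3 : 3 ≤ q := by have := hq.two_le; omega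
  have hN0 : 0 < N := by
    have : 0 < 1 + 5 * (r * q) + 8 * (r * r) := by positivity
    omega
  have hq40320 : q ∣ 40320 := hqN.trans h40320
  have hq128 : Nat.Coprime q 128 := by
    have h2 : Nat.Coprime q 2 := by
      rw [Nat.coprime_comm]
      exact Nat.coprime_two_left.mpr hoq
    have : Nat.Coprime q (2 ^ 7) := h2.pow_right 7
    simpa using this
  have hq315 : q ∣ 315 := by
    have h1 : q ∣ 128 * 315 := by norm_num; exact hq40320
    exact (hq128.dvd_mul_left).mp (by rwa [mul_comm] at h1)
  have hq357 : q = 3 ∨ q = 5 ∨ q = 7 := by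
    have h9 : (315 : ℕ) = 9 * 35 := by norm_num
    rw [h9] at hq315
    rcases (Nat.Prime.dvd_mul hq).mp hq315 with h | h
    · left
      have : (9 : ℕ) = 3 * 3 := by norm_num
      rw [this] at h
      rcases (Nat.Prime.dvd_mul hq).mp h with h' | h' <;>
        exact (Nat.prime_dvd_prime_iff_eq hq (by norm_num)).mp h'
    · have : (35 : ℕ) = 5 * 7 := by norm_num
      rw [this] at h
      rcases (Nat.Prime.dvd_mul hq).mp h with h' | h'
      · right; left; exact (Nat.prime_dvd_prime_iff_eq hq (by norm_num)).mp h'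
      · right; right; exact (Nat.prime_dvd_prime_iff_eq hq (by norm_num)).mp h'
  rcases hq357 with rfl | rfl | rfl
  · have h6 : N ∣ 6 := by
      have : Nat.factorial 3 = 6 := by norm_num [Nat.factorial]
      rwa [this] at hfac
    have hle : N ≤ 6 := Nat.le_of_dvd (by norm_num) h6
    nlinarith
  · have h120 : N ∣ 120 := by
      have : Nat.factorial 5 = 120 := by norm_num [Nat.factorial]
      rwa [this] at hfac
    have hle : N ≤ 120 := Nat.le_of_dvd (by norm_num) h120
    nlinarith
  · have h5040 : N ∣ 5040 := by
      have : Nat.factorial 7 = 5040 := by norm_num [Nat.factorial]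
      rwa [this] at hfac
    have hle : N ≤ 5040 := Nat.le_of_dvd (by norm_num) h5040
    have hr25 : r < 26 := by nlinarith
    have hN178 : 178 ≤ N := by nlinarith
    set k := 5040 / N with hk
    have hmul : N * k = 5040 := Nat.mul_div_cancel' h5040
    have hkdvd : k ∣ 5040 := ⟨N, by rw [← hmul, mul_comm]⟩
    have hk29 : k < 29 := by
      have h1 : 5040 / N ≤ 5040 / 178 := Nat.div_le_div_left hN178 (by norm_num)
      have : (5040 : ℕ) / 178 = 28 := by norm_num
      omega
    have hNk : N = 5040 / k := by
      rw [hk, Nat.div_div_self h5040 (by norm_num)]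
    have key : ∀ r' < 26, ∀ k' < 29, (3 ≤ r' ∧ r' % 2 = 1 ∧ r' ≠ 7 ∧ k' ∣ 5040 ∧
        7 ∣ 5040 / k' ∧ 1 + 5 * (r' * 7) + 8 * (r' * r') ≤ 5040 / k') →
        (5040 / k') % (4 * r') ≠ (1 + r' * 7) % (4 * r') := by
      set_option maxHeartbeats 2000000 in decide
    exact key r hr25 k hk29 ⟨hr3, hr2, hrq, hkdvd, hNk ▸ hqN, hNk ▸ hlb⟩ (hNk ▸ hmod)

set_option maxHeartbeats 1000000 in
theorem stmt_16 (r q : ℕ) (hr : r.Prime) (hq : q.Prime) (hor : Odd r)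
    (hoq : Odd q) (hrq : r ≠ q) (G : Type*) [Group G] [Finite G]
    [IsSimpleGroup G] (hna : ¬ ∀ a b : G, a * b = b * a) :
    sameSizeSet G ≠ {1, r * q, 4 * r * q, 8 * r * q, 8 * r ^ 2} := by
  classical
  intro h
  haveI : Fintype G := Fintype.ofFinite G
  have hZ : Subgroup.center G = ⊥ := aux_center_bot hna
  have hu1 : sameSizeCount G 1 = 1 := aux_sameSizeCount_one hZ
  have hrq1 : 1 < r * q := by
    have := hr.two_le; have := hq.two_le; nlinarith
  have h8r1 : 1 < 8 * r ^ 2 := by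
    have := hr.two_le; nlinarith
  -- image of classSize
  set img : Finset ℕ := Finset.univ.image (classSize (G := G)) with himg
  have hmemimg : ∀ x : G, classSize x ∈ img := fun x =>
    Finset.mem_image_of_mem _ (Finset.mem_univ x)
  have hwit : ∀ n ∈ img, ∃ x : G, classSize x = n := by
    intro n hn
    obtain ⟨x, -, hx⟩ := Finset.mem_image.mp hn
    exact ⟨x, hx⟩
  have h1img : (1 : ℕ) ∈ img := by
    have h1 : classSize (1 : G) = 1 := (aux_classSize_eq_one_iff hZ 1).mpr rfl
    have := hmemimg (1 : G)
    rwa [h1] at this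
  have huS : ∀ n ∈ img, sameSizeCount G n = 1 ∨ sameSizeCount G n = r * q ∨
      sameSizeCount G n = 4 * r * q ∨ sameSizeCount G n = 8 * r * q ∨
      sameSizeCount G n = 8 * r ^ 2 := by
    intro n hn
    obtain ⟨x, hx⟩ := hwit n hn
    have : sameSizeCount G (classSize x) ∈ sameSizeSet G := ⟨x, rfl⟩
    rw [h, hx] at this
    simpa [Set.mem_insert_iff] using this
  have hdvdu : ∀ n ∈ img, n ∣ sameSizeCount G n := by
    intro n hn
    obtain ⟨x, hx⟩ := hwit n hn
    have := aux_classSize_dvd_sameSizeCount x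
    rwa [hx] at this
  have hdvdN : ∀ n ∈ img, n ∣ Nat.card G := by
    intro n hn
    obtain ⟨x, hx⟩ := hwit n hn
    have := aux_classSize_dvd_card x
    rwa [hx] at this
  have hune1 : ∀ n ∈ img, n ≠ 1 → sameSizeCount G n ≠ 1 := by
    intro n hn hn1 hcontra
    exact hn1 (Nat.dvd_one.mp (hcontra ▸ hdvdu n hn))
  have hru : ∀ n ∈ img, n ≠ 1 → r ∣ sameSizeCount G n := by
    intro n hn hn1
    rcases huS n hn with h' | h' | h' | h' | h'
    · exact absurd h' (hune1 n hn hn1)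
    · exact ⟨q, by rw [h']⟩
    · exact ⟨4 * q, by rw [h']; ring⟩
    · exact ⟨8 * q, by rw [h']; ring⟩
    · exact ⟨8 * r, by rw [h']; ring⟩
  -- class equation
  have hCE : Nat.card G = ∑ n ∈ img, sameSizeCount G n := by
    rw [Nat.card_eq_fintype_card]; exact aux_class_equation
  have hsplit1 : Nat.card G = sameSizeCount G 1 +
      ∑ n ∈ img.erase 1, sameSizeCount G n := by
    rw [hCE, Finset.add_sum_erase img _ h1img]
  have hNr : ¬ r ∣ Nat.card G := by
    intro hd
    have hsum : r ∣ ∑ n ∈ img.erase 1, sameSizeCount G n :=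
      Finset.dvd_sum fun n hn =>
        hru n (Finset.mem_of_mem_erase hn) (Finset.ne_of_mem_erase hn)
    rw [hsplit1, hu1] at hd
    have : r ∣ 1 := (Nat.dvd_add_right hsum).mp (by rwa [add_comm] at hd)
    exact hr.ne_one (Nat.dvd_one.mp this)
  have hnr : ∀ n ∈ img, ¬ r ∣ n := fun n hn hd => hNr (hd.trans (hdvdN n hn))
  -- unique class size with count r*q is q
  have hqsize : ∀ n ∈ img, sameSizeCount G n = r * q → n = q := by
    intro n hn hun
    have hdvd : n ∣ r * q := hun ▸ hdvdu n hn
    have hcop : Nat.Coprime r n := (Nat.Prime.coprime_iff_not_dvd hr).mpr (hnr n hn)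
    have hnq : n ∣ q := (Nat.Coprime.dvd_mul_left hcop.symm).mp hdvd
    rcases (Nat.dvd_prime hq).mp hnq with h' | h'
    · exfalso
      rw [h'] at hun
      rw [hu1] at hun
      omega
    · exact h'
  -- the value r*q is attained
  have hrqS : (r * q : ℕ) ∈ sameSizeSet G := by
    rw [h]; simp [Set.mem_insert_iff]
  obtain ⟨xq, hxq⟩ := hrqS
  have hqimg : classSize xq ∈ img := hmemimg xq
  have hxqq : classSize xq = q := hqsize _ hqimg hxq.symm
  have hqimg' : q ∈ img := hxqq ▸ hqimg
  have huq : sameSizeCount G q = r * q := by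
    have h' := hxq.symm
    rwa [hxqq] at h'
  have hqN : q ∣ Nat.card G := hdvdN q hqimg'
  have hfacq : Nat.card G ∣ q.factorial := by
    have := aux_card_dvd_factorial xq (by rw [hxqq]; exact hq.one_lt)
    rwa [hxqq] at this
  -- the value 8r² is attained
  have h8S : (8 * r ^ 2 : ℕ) ∈ sameSizeSet G := by
    rw [h]; simp [Set.mem_insert_iff]
  obtain ⟨x4, hx4⟩ := h8S
  set n4 := classSize x4 with hn4
  have hn4img : n4 ∈ img := hmemimg x4
  have hun4 : sameSizeCount G n4 = 8 * r ^ 2 := hx4.symm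
  have hn4ne1 : n4 ≠ 1 := by
    intro h'
    rw [h', hu1] at hun4
    omega
  have hn4dvd8 : n4 ∣ 8 := by
    have hdvd : n4 ∣ 8 * r ^ 2 := hun4 ▸ hdvdu n4 hn4img
    have hcop : Nat.Coprime n4 r :=
      ((Nat.Prime.coprime_iff_not_dvd hr).mpr (hnr n4 hn4img)).symm
    exact (Nat.Coprime.dvd_mul_right (hcop.pow_right 2)).mp hdvd
  have hN40320 : Nat.card G ∣ 40320 := by
    have hgt1 : 1 < n4 := by
      have := aux_classSize_pos x4
      omega
    have h1 : Nat.card G ∣ n4.factorial := aux_card_dvd_factorial x4 hgt1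
    have h2 : n4.factorial ∣ Nat.factorial 8 :=
      Nat.factorial_dvd_factorial (Nat.le_of_dvd (by norm_num) hn4dvd8)
    have h3 : Nat.factorial 8 = 40320 := by norm_num [Nat.factorial]
    exact h1.trans (h3 ▸ h2)
  -- the value 4rq is attained
  have h4S : (4 * r * q : ℕ) ∈ sameSizeSet G := by
    rw [h]; simp [Set.mem_insert_iff]
  obtain ⟨x2, hx2⟩ := h4S
  set n2 := classSize x2 with hn2
  have hn2img : n2 ∈ img := hmemimg x2
  have hun2 : sameSizeCount G n2 = 4 * r * q := hx2.symm
  -- congruence mod 4r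
  have h4r : ∀ n ∈ img, n ≠ 1 → n ≠ q → 4 * r ∣ sameSizeCount G n := by
    intro n hn hn1 hnq
    rcases huS n hn with h' | h' | h' | h' | h'
    · exact absurd h' (hune1 n hn hn1)
    · exact absurd (hqsize n hn h') hnq
    · exact ⟨q, by rw [h']⟩
    · exact ⟨2 * q, by rw [h']; ring⟩
    · exact ⟨2 * r, by rw [h']; ring⟩
  have hq1 : q ∈ img.erase 1 := Finset.mem_erase.mpr ⟨hq.ne_one, hqimg'⟩
  have hsplit2 : Nat.card G = 1 + r * q +
      ∑ n ∈ (img.erase 1).erase q, sameSizeCount G n := by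
    rw [hsplit1, hu1, ← Finset.add_sum_erase (img.erase 1) _ hq1, huq]
    ring
  have hdvdrest : 4 * r ∣ ∑ n ∈ (img.erase 1).erase q, sameSizeCount G n := by
    refine Finset.dvd_sum fun n hn => ?_
    have hn' := Finset.mem_of_mem_erase hn
    exact h4r n (Finset.mem_of_mem_erase hn') (Finset.ne_of_mem_erase hn')
      (Finset.ne_of_mem_erase hn)
  have hmod : Nat.card G % (4 * r) = (1 + r * q) % (4 * r) := by
    obtain ⟨t, ht⟩ := hdvdrest
    rw [hsplit2, ht, Nat.add_mul_mod_self_left]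
  -- lower bound
  have hne_q_n2 : q ≠ n2 := by
    intro h'
    rw [← h', huq] at hun2
    nlinarith [hr.two_le, hq.two_le]
  have hne_q_n4 : q ≠ n4 := by
    intro h'
    rw [← h', huq] at hun4
    have : q = 8 * r := by nlinarith [hr.two_le]
    have := Nat.odd_iff.mp hoq
    omega
  have hne_n2_n4 : n2 ≠ n4 := by
    intro h'
    rw [h', hun4] at hun2
    have : 2 * r = q := by nlinarith [hr.two_le]
    have := Nat.odd_iff.mp hoq
    omega
  have hne_1_q : (1 : ℕ) ≠ q := fun h' => hq.ne_one h'.symm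
  have hne_1_n2 : (1 : ℕ) ≠ n2 := by
    intro h'
    rw [← h', hu1] at hun2
    nlinarith [hr.two_le, hq.two_le]
  have hne_1_n4 : (1 : ℕ) ≠ n4 := fun h' => hn4ne1 h'.symm
  have hsub : ({1, q, n2, n4} : Finset ℕ) ⊆ img := by
    intro n hn
    simp only [Finset.mem_insert, Finset.mem_singleton] at hn
    rcases hn with rfl | rfl | rfl | rfl
    · exact h1img
    · exact hqimg'
    · exact hn2img
    · exact hn4img
  have hsum4 : ∑ n ∈ ({1, q, n2, n4} : Finset ℕ), sameSizeCount G n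
      = 1 + r * q + 4 * r * q + 8 * r ^ 2 := by
    rw [Finset.sum_insert (by simp [hne_1_q, hne_1_n2, hne_1_n4]),
      Finset.sum_insert (by simp [hne_q_n2, hne_q_n4]),
      Finset.sum_insert (by simp [hne_n2_n4]),
      Finset.sum_singleton, hu1, huq, hun2, hun4]
    ring
  have hlb : 1 + r * q + 4 * r * q + 8 * r ^ 2 ≤ Nat.card G := by
    rw [hCE, ← hsum4]
    exact Finset.sum_le_sum_of_subset hsub
  -- final arithmetic contradiction
  refine aux_arith r q (Nat.card G) hr hq hor hoq hrq hfacq hN40320 hqN ?_ hmod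
  nlinarith [hlb]
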